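/- Fix an integer n ≥ 1 and a matrix W ∈ ℝ^{(2n+2)×(2n)} satisfying the one-hop margin constraints. Define W'' by W''[a_i,b_j]=W[b_i,c_j], W''[a_i,c_j]=W[b_i,b_j], W''[b_i,b_j]=W[a_i,c_j], W''[b_i,c_j]=W[a_i,b_j], W''[r_1,b_j]=W[r_2,c_j], W''[r_1,c_j]=W[r_2,b_j], W''[r_2,b_j]=W[r_1,c_j], W''[r_2,c_j]=W[r_1,b_j]. Then W'' also satisfies the one-hop margin constraints and ‖W''‖_* = ‖W‖_*. -/

import Mathlib

/-!
`swapW n W` is `W` with its rows permuted (`a_i ↔ b_i`, `r_1 ↔ r_2`) and its columns permuted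
(`b_j ↔ c_j`), and these relabellings exchange the two families of margin constraints. The
nuclear norm is `trace √(Wᴴ W)`: a row permutation leaves `Wᴴ W` unchanged, and a column
permutation conjugates it by a permutation matrix, which commutes with the continuous functional
calculus and does not change the trace.
-/

/-- The nuclear norm of a real matrix: the trace of the positive semidefinite
square root of `Wᵀ * W` (equivalently, the sum of the singular values of `W`). -/
noncomputable def nuclearNorm {m k : Type*} [Fintype m] [Fintype k] [DecidableEq k]
    (W : Matrix m k ℝ) : ℝ :=
  ((Matrix.posSemidef_conjTranspose_mul_self W).1.eigenvectorUnitary.1 *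
    Matrix.diagonal ((RCLike.ofReal : ℝ → ℝ) ∘ (√·) ∘ (Matrix.posSemidef_conjTranspose_mul_self W).1.eigenvalues) *
    (star (Matrix.posSemidef_conjTranspose_mul_self W).1.eigenvectorUnitary : Matrix k k ℝ)).trace

/-- The one-hop margin constraints: for every `i`,
`W[a_i,b_i] + W[r_1,b_i] ≥ W[a_i,y] + W[r_1,y] + 1` for every output token `y ≠ b_i`, and
`W[b_i,c_i] + W[r_2,c_i] ≥ W[b_i,y] + W[r_2,y] + 1` for every output token `y ≠ c_i`. -/
def OneHopMargin (n : ℕ) (W : Matrix (Fin n ⊕ Fin n ⊕ Fin 2) (Fin n ⊕ Fin n) ℝ) : Prop :=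
  ∀ i : Fin n,
    (∀ y : Fin n ⊕ Fin n, y ≠ Sum.inl i →
      W (Sum.inl i) (Sum.inl i) + W (Sum.inr (Sum.inr 0)) (Sum.inl i)
        ≥ W (Sum.inl i) y + W (Sum.inr (Sum.inr 0)) y + 1) ∧
    (∀ y : Fin n ⊕ Fin n, y ≠ Sum.inr i →
      W (Sum.inr (Sum.inl i)) (Sum.inr i) + W (Sum.inr (Sum.inr 1)) (Sum.inr i)
        ≥ W (Sum.inr (Sum.inl i)) y + W (Sum.inr (Sum.inr 1)) y + 1)

/-- The matrix obtained from `W` by swapping the roles of the `a`- and `b`-rows, the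
`b`- and `c`-columns, and the relations `r_1` and `r_2`. -/
def swapW (n : ℕ) (W : Matrix (Fin n ⊕ Fin n ⊕ Fin 2) (Fin n ⊕ Fin n) ℝ) :
    Matrix (Fin n ⊕ Fin n ⊕ Fin 2) (Fin n ⊕ Fin n) ℝ :=
  fun r y =>
    match r, y with
    | Sum.inl i, Sum.inl j => W (Sum.inr (Sum.inl i)) (Sum.inr j)
    | Sum.inl i, Sum.inr j => W (Sum.inr (Sum.inl i)) (Sum.inl j)
    | Sum.inr (Sum.inl i), Sum.inl j => W (Sum.inl i) (Sum.inr j)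
    | Sum.inr (Sum.inl i), Sum.inr j => W (Sum.inl i) (Sum.inl j)
    | Sum.inr (Sum.inr k), Sum.inl j =>
        W (Sum.inr (Sum.inr (if k = 0 then 1 else 0))) (Sum.inr j)
    | Sum.inr (Sum.inr k), Sum.inr j =>
        W (Sum.inr (Sum.inr (if k = 0 then 1 else 0))) (Sum.inl j)

open Matrix

section Reindex

variable {𝕜 m n : Type*} [RCLike 𝕜] [Fintype m] [DecidableEq m] [Fintype n] [DecidableEq n]

def reindexStarAlgEquiv (e : m ≃ n) : Matrix m m 𝕜 ≃⋆ₐ[ℝ] Matrix n n 𝕜 :=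
  .ofAlgEquiv (reindexAlgEquiv ℝ 𝕜 e) fun _ => (conjTranspose_submatrix _ _ _).symm

theorem cfc_submatrix_equiv (f : ℝ → ℝ) (A : Matrix m m 𝕜) (e : n ≃ m) :
    cfc f (A.submatrix e e) = (cfc f A).submatrix e e := by
  by_cases hA : A.IsHermitian
  · exact (StarAlgHomClass.map_cfc (reindexStarAlgEquiv e.symm) f A
      (A.finite_real_spectrum.continuousOn f) (continuous_id.matrix_submatrix _ _) hA
      (hA.submatrix e)).symm
  · -- off the self-adjoint matrices `cfc` is the junk value `0`
    have hA' : ¬ (A.submatrix e e).IsHermitian := (isHermitian_submatrix_equiv e).not.mpr hA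
    rw [cfc_apply_of_not_predicate (p := IsSelfAdjoint) A hA,
      cfc_apply_of_not_predicate (p := IsSelfAdjoint) _ hA']
    rfl

end Reindex

section NuclearNorm

variable {m n m' n' : Type*} [Fintype m] [Fintype n] [DecidableEq n]
  [Fintype m'] [Fintype n'] [DecidableEq n']

theorem nuclearNorm_eq_trace_cfc_sqrt (W : Matrix m n ℝ) :
    nuclearNorm W = (cfc Real.sqrt (Wᴴ * W)).trace := by
  rw [(posSemidef_conjTranspose_mul_self W).1.cfc_eq]
  rfl

theorem nuclearNorm_submatrix_equiv (W : Matrix m n ℝ) (e : m' ≃ m) (f : n' ≃ n) :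
    nuclearNorm (W.submatrix e f) = nuclearNorm W := by
  rw [nuclearNorm_eq_trace_cfc_sqrt, nuclearNorm_eq_trace_cfc_sqrt, conjTranspose_submatrix,
    submatrix_mul_equiv, cfc_submatrix_equiv]
  exact Fintype.sum_equiv f _ _ fun _ => rfl

end NuclearNorm

section Swap

variable (n : ℕ)

def swapRows : Fin n ⊕ Fin n ⊕ Fin 2 ≃ Fin n ⊕ Fin n ⊕ Fin 2 :=
  (Equiv.sumAssoc _ _ _).symm.trans <|
    (Equiv.sumCongr (Equiv.sumComm _ _) (Equiv.swap 0 1)).trans (Equiv.sumAssoc _ _ _)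

theorem swapW_eq_submatrix (W : Matrix (Fin n ⊕ Fin n ⊕ Fin 2) (Fin n ⊕ Fin n) ℝ) :
    swapW n W = W.submatrix (swapRows n) (Equiv.sumComm _ _) := by
  ext (i | i | k) (j | j) <;> (try fin_cases k) <;> rfl

variable {n}

theorem OneHopMargin.swapW {W : Matrix (Fin n ⊕ Fin n ⊕ Fin 2) (Fin n ⊕ Fin n) ℝ}
    (hW : OneHopMargin n W) : OneHopMargin n (swapW n W) := by
  intro i
  rw [swapW_eq_submatrix]
  exact ⟨fun y hy => (hW i).2 y.swap (Sum.swap_leftInverse.injective.ne hy),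
    fun y hy => (hW i).1 y.swap (Sum.swap_leftInverse.injective.ne hy)⟩

end Swap

theorem swapW_margin_and_nuclearNorm_general (n : ℕ)
    (W : Matrix (Fin n ⊕ Fin n ⊕ Fin 2) (Fin n ⊕ Fin n) ℝ)
    (hW : OneHopMargin n W) :
    OneHopMargin n (swapW n W) ∧ nuclearNorm (swapW n W) = nuclearNorm W :=
  ⟨hW.swapW, by rw [swapW_eq_submatrix]; exact nuclearNorm_submatrix_equiv W _ _⟩

/-- The swap transformation preserves the one-hop margin constraints and the
nuclear norm. -/
theorem swapW_margin_and_nuclearNorm (n : ℕ) (hn : 1 ≤ n)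
    (W : Matrix (Fin n ⊕ Fin n ⊕ Fin 2) (Fin n ⊕ Fin n) ℝ)
    (hW : OneHopMargin n W) :
    OneHopMargin n (swapW n W) ∧ nuclearNorm (swapW n W) = nuclearNorm W :=
  swapW_margin_and_nuclearNorm_general n W hW
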